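/- arXiv:1707.06364 — 4 statements merged into one kernel-verified Lean document; each statement's English description precedes it below -/
import Mathlib

section
/- Let T be a rooted tree of depth k whose edge weights lie in (0, 4/√d], and in which every vertex has weighted degree (sum of weights of incident edges, in the ambient graph) between 1 - 4/√d and 1. Define f on vertices of T by f(root) = 1 and f(v) = √(w(parent(v), v))·f(parent(v)). Then (1 - 8/√d)^k·(k+1) ≤ Σ_v f(v)² ≤ k+1. -/
/-!
Group the vertices by depth and let `C ℓ` be the sum of `f v ^ 2` over the vertices of depth `ℓ`.
Since `f v ^ 2 = wt v * f (parent v) ^ 2`, the layer `ℓ + 1` contributes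
`C (ℓ + 1) = ∑_{depth u = ℓ} (w u - wt u) * f u ^ 2`, and the factor `w u - wt u` lies in
`[1 - 8/√d, 1]` (at the root it is just `w root`). Hence `(1 - 8/√d) ^ ℓ ≤ C ℓ ≤ C 0 = 1`, and summing over the `k + 1` layers
gives both bounds.
-/

open Finset

namespace RootedTree

variable {V M : Type*} [Fintype V] [AddCommMonoid M]
  {root : V} {parent : V → V} {depth : V → ℕ}

def layerSum (depth : V → ℕ) (g : V → M) (ℓ : ℕ) : M :=
  ∑ v ∈ univ.filter (fun v => depth v = ℓ), g v

def children [DecidableEq V] (root : V) (parent : V → V) (u : V) : Finset V :=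
  univ.filter (fun v => v ≠ root ∧ parent v = u)

lemma layerSum_zero (hroot : depth root = 0) (hdepth0 : ∀ v, depth v = 0 → v = root)
    (g : V → M) : layerSum depth g 0 = g root := by
  have hlayer : univ.filter (fun v => depth v = 0) = {root} := by
    ext v
    simpa using ⟨hdepth0 v, fun h => h ▸ hroot⟩
  rw [layerSum, hlayer, sum_singleton]

lemma sum_eq_sum_range_layerSum {k : ℕ} (hdepthle : ∀ v, depth v ≤ k) (g : V → M) :
    ∑ v, g v = ∑ ℓ ∈ range (k + 1), layerSum depth g ℓ :=
  (sum_fiberwise_of_maps_to (fun v _ => mem_range.2 (Nat.lt_succ_of_le (hdepthle v))) g).symm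

lemma layerSum_succ [DecidableEq V] (hroot : depth root = 0)
    (hparent : ∀ v, v ≠ root → depth (parent v) + 1 = depth v) (g : V → M) (ℓ : ℕ) :
    layerSum depth g (ℓ + 1) = layerSum depth (fun u => ∑ v ∈ children root parent u, g v) ℓ := by
  have hne_root : ∀ v, depth v = ℓ + 1 → v ≠ root := by
    rintro v hv rfl
    omega
  rw [layerSum, ← sum_fiberwise_of_maps_to (g := parent)
    (t := univ.filter (fun u => depth u = ℓ)) (fun v hv => by
      simp only [mem_filter, mem_univ, true_and] at hv ⊢
      have := hparent v (hne_root v hv)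
      omega)]
  refine sum_congr rfl fun u hu => sum_congr ?_ fun _ _ => rfl
  ext v
  simp only [mem_filter, mem_univ, true_and] at hu
  simp only [children, mem_filter, mem_univ, true_and]
  constructor
  · rintro ⟨hv, hpv⟩
    exact ⟨hne_root v hv, hpv⟩
  · rintro ⟨hv, rfl⟩
    exact ⟨by rw [← hparent v hv, hu], rfl⟩

lemma layerSum_sq_succ_mem_Icc [DecidableEq V] (hroot : depth root = 0)
    (hparent : ∀ v, v ≠ root → depth (parent v) + 1 = depth v)
    {wt f : V → ℝ} (hf : ∀ v, v ≠ root → f v ^ 2 = wt v * f (parent v) ^ 2)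
    {a : ℝ} {ℓ : ℕ} (hchild : ∀ u, depth u = ℓ →
      a ≤ ∑ v ∈ children root parent u, wt v ∧ ∑ v ∈ children root parent u, wt v ≤ 1) :
    a * layerSum depth (f · ^ 2) ℓ ≤ layerSum depth (f · ^ 2) (ℓ + 1) ∧
      layerSum depth (f · ^ 2) (ℓ + 1) ≤ layerSum depth (f · ^ 2) ℓ := by
  have hsucc : layerSum depth (f · ^ 2) (ℓ + 1) =
      layerSum depth (fun u => (∑ v ∈ children root parent u, wt v) * f u ^ 2) ℓ := by
    rw [layerSum_succ hroot hparent]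
    refine sum_congr rfl fun u _ => ?_
    dsimp only
    rw [sum_mul]
    refine sum_congr rfl fun v hv => ?_
    simp only [children, mem_filter, mem_univ, true_and] at hv
    rw [hf v hv.1, hv.2]
  rw [hsucc, layerSum, layerSum, mul_sum]
  constructor <;> refine sum_le_sum fun u hu => ?_ <;>
    have := hchild u (mem_filter.1 hu).2 <;> nlinarith [sq_nonneg (f u)]

end RootedTree

section GeometricDecay

variable {R : Type*} [CommRing R] [LinearOrder R] [IsStrictOrderedRing R]
  {a : R} {C : ℕ → R} {k : ℕ}

lemma pow_le_and_le_one_of_decay (ha : 0 ≤ a) (hC0 : C 0 = 1)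
    (hstep : ∀ ℓ < k, a * C ℓ ≤ C (ℓ + 1) ∧ C (ℓ + 1) ≤ C ℓ) :
    ∀ ℓ ≤ k, a ^ ℓ ≤ C ℓ ∧ C ℓ ≤ 1
  | 0, _ => by simp [hC0]
  | ℓ + 1, hℓ => by
    obtain ⟨ih_lower, ih_upper⟩ := pow_le_and_le_one_of_decay ha hC0 hstep ℓ (by omega)
    obtain ⟨step_lower, step_upper⟩ := hstep ℓ (by omega)
    exact ⟨(pow_succ' a ℓ).trans_le ((mul_le_mul_of_nonneg_left ih_lower ha).trans step_lower),
      step_upper.trans ih_upper⟩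

lemma sum_range_mem_Icc_of_decay (ha₀ : 0 ≤ a) (ha₁ : a ≤ 1) (hC0 : C 0 = 1)
    (hstep : ∀ ℓ < k, a * C ℓ ≤ C (ℓ + 1) ∧ C (ℓ + 1) ≤ C ℓ) :
    a ^ k * (k + 1 : R) ≤ ∑ ℓ ∈ range (k + 1), C ℓ ∧ ∑ ℓ ∈ range (k + 1), C ℓ ≤ (k + 1 : R) := by
  have hbound := pow_le_and_le_one_of_decay ha₀ hC0 hstep
  have hcard : ∀ c : R, ∑ _ℓ ∈ range (k + 1), c = c * (k + 1 : R) := fun c => by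
    rw [sum_const, card_range, nsmul_eq_mul, mul_comm]
    push_cast
    rfl
  constructor
  · rw [← hcard]
    refine sum_le_sum fun ℓ hℓ => ?_
    have hℓk : ℓ ≤ k := Nat.lt_succ_iff.1 (mem_range.1 hℓ)
    exact (pow_le_pow_of_le_one ha₀ ha₁ hℓk).trans (hbound ℓ hℓk).1
  · rw [← one_mul (k + 1 : R), ← hcard]
    exact sum_le_sum fun ℓ hℓ => (hbound ℓ (Nat.lt_succ_iff.1 (mem_range.1 hℓ))).2

end GeometricDecay

lemma eight_lt_sqrt {d : ℝ} (hd : 64 < d) : 8 < Real.sqrt d := by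
  rw [show (8 : ℝ) = Real.sqrt 64 by rw [show (64 : ℝ) = 8 ^ 2 by norm_num, Real.sqrt_sq (by norm_num)]]
  exact Real.sqrt_lt_sqrt (by norm_num) hd

open RootedTree in
theorem tree_test_function_norm_general
    {V : Type*} [Fintype V] [DecidableEq V]
    (k : ℕ) (d : ℝ) (hd : 64 < d)
    (root : V) (parent : V → V) (depth : V → ℕ)
    (hroot : depth root = 0)
    (hdepth0 : ∀ v, depth v = 0 → v = root)
    (hparent : ∀ v, v ≠ root → depth (parent v) + 1 = depth v)
    (hdepthle : ∀ v, depth v ≤ k)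
    (wt : V → ℝ)
    (hwt : ∀ v, v ≠ root → 0 < wt v ∧ wt v ≤ 4 / Real.sqrt d)
    (w : V → ℝ)
    (hw : ∀ u, 1 - 4 / Real.sqrt d ≤ w u ∧ w u ≤ 1)
    (hchildren : ∀ u, depth u < k →
      ∑ v ∈ Finset.univ.filter (fun v => v ≠ root ∧ parent v = u), wt v
        = w u - (if u = root then 0 else wt u))
    (f : V → ℝ)
    (hf0 : f root = 1)
    (hfrec : ∀ v, v ≠ root → f v = Real.sqrt (wt v) * f (parent v)) :
    (1 - 8 / Real.sqrt d) ^ k * (k + 1 : ℝ) ≤ ∑ v, f v ^ 2 ∧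
      ∑ v, f v ^ 2 ≤ (k + 1 : ℝ) := by
  have hsqrt := eight_lt_sqrt hd
  have hpos : 0 < 4 / Real.sqrt d := by positivity
  have hhalf : 8 / Real.sqrt d = 4 / Real.sqrt d + 4 / Real.sqrt d := by ring
  have hcoef : 0 ≤ 1 - 8 / Real.sqrt d := by
    linarith [(div_lt_one (by linarith)).2 hsqrt]
  have hfsq : ∀ v, v ≠ root → f v ^ 2 = wt v * f (parent v) ^ 2 := fun v hv => by
    rw [hfrec v hv, mul_pow, Real.sq_sqrt (hwt v hv).1.le]
  have hchildwt : ∀ u, depth u < k → 1 - 8 / Real.sqrt d ≤ ∑ v ∈ children root parent u, wt v ∧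
      ∑ v ∈ children root parent u, wt v ≤ 1 := fun u hu => by
    rw [children, hchildren u hu]
    have := hw u
    split_ifs with hu_root
    · constructor <;> linarith
    · have := hwt u hu_root
      constructor <;> linarith
  rw [sum_eq_sum_range_layerSum hdepthle]
  refine sum_range_mem_Icc_of_decay hcoef (by linarith) ?_ fun ℓ hℓ => ?_
  · rw [layerSum_zero hroot hdepth0, hf0, one_pow]
  · exact layerSum_sq_succ_mem_Icc hroot hparent hfsq fun u hu => hchildwt u (hu ▸ hℓ)

/-- On a rooted tree of depth exactly k whose edge weights lie in (0, 4/√d] and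
whose vertices have ambient weighted degree in [1 - 4/√d, 1] (the children-edge weights of a
vertex of depth < k sum to its degree minus its parent-edge weight), the function
f(root) = 1, f(v) = √(w(parent v, v)) · f(parent v) satisfies
(1 - 8/√d)^k (k+1) ≤ Σ f(v)² ≤ k+1. -/
theorem tree_test_function_norm
    {V : Type*} [Fintype V] [DecidableEq V]
    (k : ℕ) (d : ℝ) (hd : 64 < d)
    (root : V) (parent : V → V) (depth : V → ℕ)
    (hroot : depth root = 0)
    (hdepth0 : ∀ v, depth v = 0 → v = root)
    (hparent : ∀ v, v ≠ root → depth (parent v) + 1 = depth v)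
    (hdepthle : ∀ v, depth v ≤ k)
    (hdepthk : ∃ v, depth v = k)
    (wt : V → ℝ)
    (hwt : ∀ v, v ≠ root → 0 < wt v ∧ wt v ≤ 4 / Real.sqrt d)
    (w : V → ℝ)
    (hw : ∀ u, 1 - 4 / Real.sqrt d ≤ w u ∧ w u ≤ 1)
    (hchildren : ∀ u, depth u < k →
      ∑ v ∈ Finset.univ.filter (fun v => v ≠ root ∧ parent v = u), wt v
        = w u - (if u = root then 0 else wt u))
    (f : V → ℝ)
    (hf0 : f root = 1)
    (hfrec : ∀ v, v ≠ root → f v = Real.sqrt (wt v) * f (parent v)) :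
    (1 - 8 / Real.sqrt d) ^ k * (k + 1 : ℝ) ≤ ∑ v, f v ^ 2 ∧
      ∑ v, f v ^ 2 ≤ (k + 1 : ℝ) :=
  tree_test_function_norm_general k d hd root parent depth hroot hdepth0 hparent hdepthle wt hwt w
    hw hchildren f hf0 hfrec
end

section
/- Let A be a real symmetric n×n matrix with spectral decomposition A = Σ_j λ_j u_j u_jᵀ, and let v be a unit-norm vector satisfying ⟨v, u_j⟩² = 1/n for all j. Then for any real s, the characteristic polynomial of A + s·vvᵀ equals p(x) - (s/n)·p'(x), where p(x) = det(xI - A). -/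
/-!
Writing `A = Uᵀ D U` with `U` the orthogonal matrix of eigenvectors and `w = U v`, the update
`A + s vvᵀ` is conjugate to `D + s wwᵀ`. By the matrix determinant lemma, in its adjugate form
`det (M + a bᵀ) = det M + bᵀ (adj M) a` applied to `M = xI - D`, its characteristic polynomial is
`p - s ∑ⱼ wⱼ² ∏_{k ≠ j} (x - λₖ)`, and `wⱼ² = 1/n` turns the sum into `p' / n`.
-/

open Polynomial Matrix

namespace Matrix

variable {m R : Type*} [Fintype m] [DecidableEq m]

theorem det_add_vecMulVec_of_isUnit [CommRing R] {A : Matrix m m R} (hA : IsUnit A.det)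
    (u v : m → R) : (A + vecMulVec u v).det = A.det + v ⬝ᵥ A.adjugate *ᵥ u := by
  rw [vecMulVec_eq Unit, det_add_replicateCol_mul_replicateRow hA,
    det_unique (1 + replicateRow Unit v * A⁻¹ * replicateCol Unit u), Matrix.add_apply,
    one_apply_eq, ← replicateRow_vecMul, replicateRow_mul_replicateCol_apply, mul_add, mul_one,
    ← smul_eq_mul, ← dotProduct_mulVec, ← dotProduct_smul, det_smul_inv_mulVec_eq_cramer _ _ hA,
    cramer_eq_adjugate_mulVec]

/-- Over a domain it suffices that `A.det ≠ 0`: the determinant becomes a unit in the fraction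
field. -/
theorem det_add_vecMulVec [CommRing R] [IsDomain R] {A : Matrix m m R} (hA : A.det ≠ 0)
    (u v : m → R) : (A + vecMulVec u v).det = A.det + v ⬝ᵥ A.adjugate *ᵥ u := by
  let φ := algebraMap R (FractionRing R)
  have hφ : Function.Injective φ := IsFractionRing.injective R (FractionRing R)
  have hunit : IsUnit (φ.mapMatrix A).det := by
    rw [← RingHom.map_det]
    exact ((map_ne_zero_iff φ hφ).mpr hA).isUnit
  have hvecMulVec : φ.mapMatrix (vecMulVec u v) = vecMulVec (φ ∘ u) (φ ∘ v) := by
    ext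
    simp [vecMulVec_apply]
  apply hφ
  rw [RingHom.map_det, map_add, hvecMulVec, det_add_vecMulVec_of_isUnit hunit, map_add,
    RingHom.map_det, RingHom.map_dotProduct, ← RingHom.map_adjugate]
  congr 2
  ext i
  exact (RingHom.map_mulVec φ _ u i).symm

theorem charpoly_diagonal_add_vecMulVec [CommRing R] [IsDomain R] (d a b : m → R) :
    (diagonal d + vecMulVec a b).charpoly
      = ∏ i, (X - C (d i)) - ∑ j, C (a j * b j) * ∏ k ∈ Finset.univ.erase j, (X - C (d k)) := by
  have hcharmatrix : charmatrix (diagonal d + vecMulVec a b)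
      = diagonal (fun i => X - C (d i)) + vecMulVec (fun i => -C (a i)) (fun i => C (b i)) := by
    ext i j : 1
    rcases eq_or_ne i j with rfl | h
    · simp only [charmatrix_apply_eq, Matrix.add_apply, diagonal_apply_eq, vecMulVec_apply,
        map_add, map_mul]
      ring
    · simp [h, vecMulVec_apply]
  have hdet : (diagonal fun i => X - C (d i)).det ≠ 0 := by
    rw [det_diagonal]
    exact Finset.prod_ne_zero_iff.mpr fun i _ => X_sub_C_ne_zero (d i)
  rw [charpoly, hcharmatrix, det_add_vecMulVec hdet, det_diagonal, adjugate_diagonal,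
    dotProduct, sub_eq_add_neg, ← Finset.sum_neg_distrib]
  congr 1
  refine Finset.sum_congr rfl fun j _ => ?_
  simp only [mulVec_diagonal, map_mul]
  ring

theorem charpoly_transpose_mul_mul_of_mul_transpose_eq_one [CommRing R] {U : Matrix m m R}
    (hU : U * Uᵀ = 1) (M : Matrix m m R) : (Uᵀ * M * U).charpoly = M.charpoly := by
  rw [charpoly_mul_comm, ← Matrix.mul_assoc, hU, Matrix.one_mul]

theorem sum_smul_vecMulVec_eq_transpose_mul_diagonal_mul {n ι : Type*} [Fintype ι] [DecidableEq ι]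
    [CommSemiring R] (lam : ι → R) (u : ι → n → R) :
    ∑ j, lam j • vecMulVec (u j) (u j) = (of u)ᵀ * diagonal lam * of u := by
  ext i k
  simp only [mul_apply, diagonal_apply, mul_ite, mul_zero, Finset.sum_ite_eq', Finset.mem_univ,
    if_true, sum_apply, smul_apply, vecMulVec_apply, smul_eq_mul, transpose_apply, of_apply]
  exact Finset.sum_congr rfl fun j _ => by ring

end Matrix

theorem Polynomial.derivative_prod_X_sub_C {ι R : Type*} [CommRing R] [DecidableEq ι]
    (s : Finset ι) (d : ι → R) :
    derivative (∏ i ∈ s, (X - C (d i))) = ∑ j ∈ s, ∏ k ∈ s.erase j, (X - C (d k)) := by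
  simp only [derivative_prod_finset, derivative_X_sub_C, mul_one]

open Polynomial Matrix in
theorem rank_one_update_charpoly_general
    (n : ℕ)
    (A : Matrix (Fin n) (Fin n) ℝ)
    (lam : Fin n → ℝ) (u : Fin n → (Fin n → ℝ))
    (horth : ∀ i j, u i ⬝ᵥ u j = if i = j then (1 : ℝ) else 0)
    (hspec : A = ∑ j, lam j • Matrix.vecMulVec (u j) (u j))
    (v : Fin n → ℝ)
    (hinner : ∀ j, (v ⬝ᵥ u j) ^ 2 = 1 / n)
    (s : ℝ) :
    (A + s • Matrix.vecMulVec v v).charpoly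
      = A.charpoly - Polynomial.C (s / n) * Polynomial.derivative A.charpoly := by
  set U := of u
  have hU : U * Uᵀ = 1 := by
    ext i j
    simpa [U, mul_apply, dotProduct, one_apply] using horth i j
  set w := U *ᵥ v
  have hv : Uᵀ *ᵥ w = v := by rw [mulVec_mulVec, mul_eq_one_comm.mp hU, one_mulVec]
  have hw : ∀ j, s * w j * w j = s / n := fun j => by
    rw [mul_assoc, ← sq, show w j = v ⬝ᵥ u j from dotProduct_comm _ _, hinner j, mul_one_div]
  have hA : A = Uᵀ * diagonal lam * U :=
    hspec.trans (sum_smul_vecMulVec_eq_transpose_mul_diagonal_mul lam u)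
  have hvv : s • vecMulVec v v = Uᵀ * vecMulVec (s • w) w * U := by
    rw [mul_vecMulVec, vecMulVec_mul, ← mulVec_transpose, mulVec_smul, hv, smul_vecMulVec]
  have hcharA : A.charpoly = ∏ i, (X - C (lam i)) := by
    rw [hA, charpoly_transpose_mul_mul_of_mul_transpose_eq_one hU, charpoly_diagonal]
  rw [hcharA, hA, hvv, ← Matrix.add_mul, ← Matrix.mul_add,
    charpoly_transpose_mul_mul_of_mul_transpose_eq_one hU, charpoly_diagonal_add_vecMulVec,
    derivative_prod_X_sub_C, Finset.mul_sum]
  simp only [Pi.smul_apply, smul_eq_mul, hw]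

open Polynomial Matrix in
/-- If A is real symmetric with orthonormal eigenbasis u_j and v is a unit vector
with ⟨v, u_j⟩² = 1/n for all j, then charpoly(A + s·vvᵀ) = p(x) - (s/n)·p'(x), where
p = charpoly(A). -/
theorem rank_one_update_charpoly
    (n : ℕ) (hn : 1 ≤ n)
    (A : Matrix (Fin n) (Fin n) ℝ) (hA : A.IsSymm)
    (lam : Fin n → ℝ) (u : Fin n → (Fin n → ℝ))
    (horth : ∀ i j, u i ⬝ᵥ u j = if i = j then (1 : ℝ) else 0)
    (hspec : A = ∑ j, lam j • Matrix.vecMulVec (u j) (u j))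
    (v : Fin n → ℝ) (hv : v ⬝ᵥ v = 1)
    (hinner : ∀ j, (v ⬝ᵥ u j) ^ 2 = 1 / n)
    (s : ℝ) :
    (A + s • Matrix.vecMulVec v v).charpoly
      = A.charpoly - Polynomial.C (s / n) * Polynomial.derivative A.charpoly :=
  rank_one_update_charpoly_general n A lam u horth hspec v hinner s
end

section
/- For a positive real α and positive integers n ≤ T, the polynomial (1 - αD)^T x^n equals α^n · n! · L_n^{(T-n)}(x/α) up to the standard normalization, i.e., (1 - αD)^T x^n = (-α)^n n! · L_n^{(T-n)}(x/α) where L_n^{(β)} is the associated (generalized) Laguerre polynomial of degree n and parameter β = T - n; in particular its roots are α times the roots of L_n^{(T-n)}. -/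
open Polynomial

/-- The generalized (associated) Laguerre polynomial
`L_n^{(β)}(x) = Σ_{j=0}^n (-1)^j · C(n+β, n-j) · x^j / j!` as a real polynomial. -/
noncomputable def genLaguerre (n β : ℕ) : Polynomial ℝ :=
  ∑ j ∈ Finset.range (n + 1),
    Polynomial.C ((-1 : ℝ) ^ j * (Nat.choose (n + β) (n - j) : ℝ) / (Nat.factorial j : ℝ)) *
      Polynomial.X ^ j

/-!
Since `1` and `D` commute, `(1 - αD)^T = ∑ₘ C(T, m) (-α)^m Dᵐ`, and
`Dᵐ xⁿ = n(n-1)⋯(n-m+1) x^(n-m)` vanishes for `m > n`. Writing `j = n - m`, the coefficient of `xʲ` is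
`C(T, n-j) (-α)^(n-j) n!/j!`, which is the coefficient of `xʲ` in `(-α)ⁿ n! L_n^{(T-n)}(x/α)`
because `n + (T - n) = T`.
-/

open Finset

theorem Polynomial.iterate_sub_C_mul_derivative {R : Type*} [CommRing R] (a : R) (T : ℕ)
    (p : R[X]) :
    (fun q : R[X] => q - C a * derivative q)^[T] p
      = ∑ m ∈ range (T + 1), C ((T.choose m : R) * (-a) ^ m) * derivative^[m] p := by
  have hop : (fun q : R[X] => q - C a * derivative q)
      = ⇑((-a) • (derivative : R[X] →ₗ[R] R[X]) + 1) := by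
    funext q
    simp [smul_eq_C_mul, sub_eq_neg_add]
  rw [hop, ← Module.End.pow_apply, (Commute.one_right _).add_pow, LinearMap.sum_apply]
  refine sum_congr rfl fun m _ => ?_
  rw [one_pow, mul_one, Module.End.mul_apply, Module.End.natCast_apply, map_nsmul,
    _root_.smul_pow, LinearMap.smul_apply, Module.End.pow_apply, nsmul_eq_mul, smul_eq_C_mul]
  simp only [map_mul, map_pow, map_natCast]
  ring

theorem C_mul_genLaguerre_comp_C_inv_mul_X (n β : ℕ) {α : ℝ} (hα : α ≠ 0) :
    C ((-α) ^ n * (n.factorial : ℝ)) * (genLaguerre n β).comp (C α⁻¹ * X)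
      = ∑ j ∈ range (n + 1),
          C (((n + β).choose (n - j) : ℝ) * (-α) ^ (n - j) * (n.descFactorial (n - j) : ℝ)) *
            X ^ j := by
  rw [genLaguerre, Polynomial.sum_comp, mul_sum]
  refine sum_congr rfl fun j hj => ?_
  have hjn : j ≤ n := Nat.lt_succ_iff.mp (mem_range.mp hj)
  have hfact : (n.factorial : ℝ) / j.factorial = n.descFactorial (n - j) := by
    rw [div_eq_iff (by positivity), mul_comm]
    exact_mod_cast (Nat.sub_sub_self hjn ▸ Nat.factorial_mul_descFactorial (Nat.sub_le n j)).symm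
  have hsign : (-α) ^ j * (-1) ^ j * α⁻¹ ^ j = 1 := by
    rw [← mul_pow, ← mul_pow, neg_mul_neg, mul_one, mul_inv_cancel₀ hα, one_pow]
  simp only [mul_comp, C_comp, pow_comp, X_comp, mul_pow, ← C_pow, ← mul_assoc, ← C_mul]
  congr 2
  calc (-α) ^ n * n.factorial * ((-1) ^ j * ((n + β).choose (n - j)) / j.factorial) * α⁻¹ ^ j
      = (n + β).choose (n - j) * (-α) ^ (n - j) * (n.factorial / j.factorial)
          * ((-α) ^ j * (-1) ^ j * α⁻¹ ^ j) := by
        rw [← pow_sub_mul_pow (-α) hjn]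
        ring
    _ = (n + β).choose (n - j) * (-α) ^ (n - j) * n.descFactorial (n - j) := by
        rw [hfact, hsign, mul_one]

theorem Polynomial.iterate_sub_C_mul_derivative_X_pow {R : Type*} [CommRing R] (a : R)
    {n T : ℕ} (hnT : n ≤ T) :
    (fun q : R[X] => q - C a * derivative q)^[T] (X ^ n)
      = ∑ j ∈ range (n + 1),
          C ((T.choose (n - j) : R) * (-a) ^ (n - j) * (n.descFactorial (n - j) : R)) * X ^ j := by
  have hvanish : ∀ m ∈ range (T + 1), m ∉ range (n + 1) →
      C ((T.choose m : R) * (-a) ^ m) * derivative^[m] (X ^ n) = 0 := fun m _ hm => by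
    rw [iterate_derivative_X_pow_eq_C_mul, Nat.descFactorial_of_lt (by simpa using hm)]
    simp
  rw [iterate_sub_C_mul_derivative, ← sum_subset (range_subset_range.2 (by omega)) hvanish,
    ← sum_range_reflect]
  refine sum_congr rfl fun m hm => ?_
  have hmn : m ≤ n := Nat.lt_succ_iff.mp (mem_range.mp hm)
  rw [iterate_derivative_X_pow_eq_C_mul, ← mul_assoc, ← C_mul, Nat.add_sub_cancel,
    Nat.sub_sub_self hmn]

theorem iterated_operator_is_laguerre_general
    (α : ℝ) (hα : 0 < α) (n T : ℕ) (hnT : n ≤ T) :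
    (fun p : Polynomial ℝ => p - Polynomial.C α * Polynomial.derivative p)^[T]
        (Polynomial.X ^ n)
      = Polynomial.C ((-α) ^ n * (Nat.factorial n : ℝ)) *
          (genLaguerre n (T - n)).comp (Polynomial.C α⁻¹ * Polynomial.X) := by
  rw [iterate_sub_C_mul_derivative_X_pow α hnT,
    C_mul_genLaguerre_comp_C_inv_mul_X n (T - n) hα.ne', Nat.add_sub_cancel' hnT]

/-- For α > 0 and 1 ≤ n ≤ T,
`(1 - αD)^T xⁿ = (-α)ⁿ · n! · L_n^{(T-n)}(x/α)`. -/
theorem iterated_operator_is_laguerre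
    (α : ℝ) (hα : 0 < α) (n T : ℕ) (hn : 1 ≤ n) (hnT : n ≤ T) :
    (fun p : Polynomial ℝ => p - Polynomial.C α * Polynomial.derivative p)^[T]
        (Polynomial.X ^ n)
      = Polynomial.C ((-α) ^ n * (Nat.factorial n : ℝ)) *
          (genLaguerre n (T - n)).comp (Polynomial.C α⁻¹ * Polynomial.X) :=
  iterated_operator_is_laguerre_general α hα n T hnT
end

section
/- Let G be a weighted graph with maximum weighted degree 1, minimum weighted degree at least 1 - 4/√d, all edge weights at most 4/√d, minimum combinatorial degree at least d/4, and girth greater than 2k+1. Then there exists a vertex r such that f_rᵀ W f_r ≥ 2k/√d - C·k²/d^{3/4} for an absolute constant C, where W is the weighted adjacency matrix and f_r(v) is the square root of the product of edge weights along the unique shortest path from r to v if dist(r,v) ≤ k, and 0 otherwise. -/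
/-!
Summing `f rᵀ W f r` over all roots `r`, each dart `(u, v)` that leads from level `ℓ < k` to
level `ℓ + 1` of the tree around `r` contributes `W(u,v) ^ (3/2) f r u ^ 2` twice, through
`(u, v)` and `(v, u)`, so the sum is at least `2 ∑ W(u,v) ^ (3/2) ∑_{ℓ < k} rootMass ℓ u v` over
all darts. Moving one level further from the
roots multiplies `rootMass` by at least `1 - 8 / √d`: the weighted degree of `u` is at least
`1 - 4 / √d`, and dropping the edge back to `v` costs at most `4 / √d`. Finally there are `d n`
darts of total weight at least `n (1 - 4 / √d)`, so by Hölder `∑ W(u,v) ^ (3/2)` is at least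
about `n / √d`, and some root does at least as well as the average.
-/

open Finset Matrix

namespace SimpleGraph

variable {V : Type*} {G : SimpleGraph V} {r u v : V}

theorem Walk.IsPath.eq_of_length_add_length_lt_egirth {p q : G.Walk u v} (hp : p.IsPath)
    (hq : q.IsPath) (h : ((p.length + q.length : ℕ) : ℕ∞) < G.egirth) : p = q := by
  by_contra hne
  obtain ⟨_, _, p', q', hp', hq', hcyc⟩ := hp.exists_isCycle_of_ne hq hne
  have hlen := G.egirth_le_length hcyc
  rw [Walk.length_append, Walk.length_reverse] at hlen
  have := Walk.length_le_of_isSubwalk hp'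
  have := Walk.length_le_of_isSubwalk hq'
  exact h.not_ge (hlen.trans (by exact_mod_cast (by omega)))

theorem Walk.dist_lt_of_mem_support_of_ne (p : G.Walk r u) {x : V} (hx : x ∈ p.support)
    (hxu : x ≠ u) : G.dist r x < p.length := by
  classical
  exact (dist_le _).trans_lt (p.length_takeUntil_lt_length hx hxu)

theorem Walk.isPath_concat_of_length_eq_dist {p : G.Walk r u} (hp : p.length = G.dist r u)
    (h : G.Adj u v) (hv : G.dist r u ≤ G.dist r v) : (p.concat h).IsPath :=
  (p.isPath_of_length_eq_dist hp).concat
    (fun hmem => (p.dist_lt_of_mem_support_of_ne hmem h.ne').not_ge (hp ▸ hv)) h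

theorem exists_adj_dist_add_one_eq (hr : G.Reachable r v) (hv : G.dist r v ≠ 0) :
    ∃ u, G.Adj u v ∧ G.dist r u + 1 = G.dist r v := by
  obtain ⟨p, hp⟩ := hr.exists_walk_length_eq_dist
  have hnil : ¬p.Nil := fun h => hv (hp ▸ h.length_eq_zero)
  refine ⟨p.penultimate, p.adj_penultimate hnil, ?_⟩
  have := dist_le p.dropLast
  have := Walk.length_dropLast_add_one hnil
  rcases (p.adj_penultimate hnil).diff_dist_adj (u := r) with h | h | h <;> omega

theorem Adj.dist_ne_of_lt_egirth (h : G.Adj u v) (hr : G.Reachable r u)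
    (hG : ((2 * G.dist r u + 1 : ℕ) : ℕ∞) < G.egirth) : G.dist r u ≠ G.dist r v := by
  intro huv
  obtain ⟨p, hp⟩ := hr.exists_walk_length_eq_dist
  obtain ⟨q, hq⟩ := (hr.trans h.reachable).exists_walk_length_eq_dist
  have hpq := (Walk.isPath_concat_of_length_eq_dist hp h huv.le).eq_of_length_add_length_lt_egirth
    (q.isPath_of_length_eq_dist hq)
    (by rwa [Walk.length_concat, hp, hq, ← huv, add_right_comm, ← two_mul])
  have := congrArg Walk.length hpq
  rw [Walk.length_concat] at this
  omega

theorem Adj.eq_of_dist_add_one_eq_of_lt_egirth {q q' : V} (h : G.Adj q u) (h' : G.Adj q' u)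
    (hq : G.dist r q + 1 = G.dist r u) (hq' : G.dist r q' + 1 = G.dist r u)
    (hG : ((2 * G.dist r u : ℕ) : ℕ∞) < G.egirth) : q = q' := by
  have hr : G.Reachable r u := Reachable.of_dist_ne_zero (by omega)
  obtain ⟨p, hp⟩ := (hr.trans h.symm.reachable).exists_walk_length_eq_dist
  obtain ⟨p', hp'⟩ := (hr.trans h'.symm.reachable).exists_walk_length_eq_dist
  have hc : (p.concat h).length = G.dist r u := by rw [Walk.length_concat, hp, hq]
  have hc' : (p'.concat h').length = G.dist r u := by rw [Walk.length_concat, hp', hq']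
  obtain ⟨rfl, -⟩ := Walk.concat_inj <|
    ((p.concat h).isPath_of_length_eq_dist hc).eq_of_length_add_length_lt_egirth
      ((p'.concat h').isPath_of_length_eq_dist hc') (by rwa [hc, hc', ← two_mul])
  rfl

theorem Adj.dist_add_one_eq_of_lt_egirth {q : V} (huv : G.Adj u v) (hqu : G.Adj q u)
    (hqv : q ≠ v) (hq : G.dist r q + 1 = G.dist r u)
    (hG : ((2 * G.dist r u + 1 : ℕ) : ℕ∞) < G.egirth) : G.dist r u + 1 = G.dist r v := by
  have hG' : ((2 * G.dist r u : ℕ) : ℕ∞) < G.egirth :=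
    lt_of_le_of_lt (by exact_mod_cast Nat.le_succ _) hG
  have hne := huv.dist_ne_of_lt_egirth (Reachable.of_dist_ne_zero (by omega)) hG
  have hv : G.dist r v + 1 ≠ G.dist r u := fun h =>
    hqv (hqu.eq_of_dist_add_one_eq_of_lt_egirth huv.symm hq h hG')
  rcases huv.diff_dist_adj (u := r) with h | h | h <;> omega

theorem card_filter_adj_eq_two_mul_card_edgeFinset [Fintype V] (G : SimpleGraph V)
    [DecidableRel G.Adj] : #{p : V × V | G.Adj p.1 p.2} = 2 * #G.edgeFinset := by
  classical
  rw [← sum_degrees_eq_twice_card_edges, card_filter, Fintype.sum_prod_type]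
  refine sum_congr rfl fun u _ => ?_
  rw [← card_neighborFinset_eq_degree, neighborFinset_eq_filter, card_filter]

end SimpleGraph

theorem Finset.sum_pow_three_le_sq_sum_mul_sqrt_mul_card {ι : Type*} (s : Finset ι)
    (w : ι → ℝ) (hw : ∀ i ∈ s, 0 ≤ w i) :
    (∑ i ∈ s, w i) ^ 3 ≤ (∑ i ∈ s, w i * √(w i)) ^ 2 * #s := by
  set S := ∑ i ∈ s, w i
  set T := ∑ i ∈ s, w i * √(w i)
  set R := ∑ i ∈ s, √(w i)
  have hST : S ^ 2 ≤ T * R := s.sum_sq_le_sum_mul_sum_of_sq_le_mul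
    (fun i hi => mul_nonneg (hw i hi) (Real.sqrt_nonneg _)) (fun i _ => Real.sqrt_nonneg _)
    fun i hi => by rw [mul_assoc, Real.mul_self_sqrt (hw i hi), sq]
  have hRS : R ^ 2 ≤ S * #s := by
    simpa using s.sum_sq_le_sum_mul_sum_of_sq_le_mul (r := fun i => √(w i)) (g := fun _ => 1)
      hw (fun _ _ => zero_le_one) fun i hi => by rw [Real.sq_sqrt (hw i hi), mul_one]
  have hS0 : 0 ≤ S := sum_nonneg hw
  rcases hS0.eq_or_lt with hS | hS
  · rw [← hS, zero_pow three_ne_zero]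
    positivity
  refine le_of_mul_le_mul_left ?_ hS
  calc S * S ^ 3 = (S ^ 2) ^ 2 := by ring
    _ ≤ (T * R) ^ 2 := by gcongr
    _ = T ^ 2 * R ^ 2 := by ring
    _ ≤ T ^ 2 * (S * #s) := by gcongr
    _ = S * (T ^ 2 * #s) := by ring

open SimpleGraph

section PathWeight

variable {V : Type*} {G : SimpleGraph V} {W : Matrix V V ℝ} {k : ℕ} {f : V → V → ℝ}

/-- The paper's family `f_r`, pinned down by recursion along geodesics from `r`. -/
structure IsTruncatedPathWeight (G : SimpleGraph V) (W : Matrix V V ℝ) (k : ℕ)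
    (f : V → V → ℝ) : Prop where
  apply_self : ∀ r, f r r = 1
  eq_zero_of_lt_dist : ∀ r v, k < G.dist r v → f r v = 0
  eq_zero_of_not_reachable : ∀ r v, ¬ G.Reachable r v → f r v = 0
  eq_sqrt_mul : ∀ r v u, 1 ≤ G.dist r v → G.dist r v ≤ k → G.Adj u v →
    G.dist r u + 1 = G.dist r v → f r v = √(W u v) * f r u

theorem IsTruncatedPathWeight.nonneg (hf : IsTruncatedPathWeight G W k f) (r v : V) :
    0 ≤ f r v := by
  by_cases hr : G.Reachable r v
  swap
  · rw [hf.eq_zero_of_not_reachable r v hr]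
  induction hm : G.dist r v using Nat.strong_induction_on generalizing v with
  | _ m ih =>
    rcases Nat.eq_zero_or_pos m with rfl | hpos
    · obtain rfl := hr.dist_eq_zero_iff.mp hm
      exact (hf.apply_self r).symm ▸ zero_le_one
    by_cases hk : k < m
    · rw [hf.eq_zero_of_lt_dist r v (hm ▸ hk)]
    obtain ⟨u, hu, hdist⟩ := exists_adj_dist_add_one_eq hr (by omega)
    rw [hf.eq_sqrt_mul r v u (by omega) (by omega) hu hdist]
    exact mul_nonneg (Real.sqrt_nonneg _) (ih _ (by omega) u (hr.trans hu.symm.reachable) rfl)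

variable [Fintype V] [DecidableRel G.Adj]

variable (G k) in
noncomputable def outwardDarts (r : V) : Finset (V × V) :=
  {p | G.Adj p.1 p.2 ∧ G.dist r p.1 + 1 = G.dist r p.2 ∧ G.dist r p.2 ≤ k}

variable (G f) in
/-- For `ℓ < k` and girth above `2 k + 1`, this is the total `W`-weight of the non-backtracking
walks of length `ℓ` from `u` whose first step avoids `v`: each of them is the geodesic from `u`
back to one of the roots `r` summed over, and `f r u ^ 2` is its weight. -/
noncomputable def rootMass (ℓ : ℕ) (u v : V) : ℝ :=
  ∑ r with G.dist r u = ℓ ∧ G.dist r v = ℓ + 1, f r u ^ 2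

theorem IsTruncatedPathWeight.two_mul_sum_outwardDarts_le_dotProduct_mulVec [DecidableEq V]
    (hf : IsTruncatedPathWeight G W k f) (hW : W.IsSymm) (hW0 : ∀ u v, 0 ≤ W u v) (r : V) :
    2 * ∑ p ∈ outwardDarts G k r, W p.1 p.2 * √(W p.1 p.2) * f r p.1 ^ 2 ≤
      f r ⬝ᵥ (W *ᵥ f r) := by
  set D := outwardDarts G k r
  set g : V × V → ℝ := fun p => f r p.1 * W p.1 p.2 * f r p.2
  have hQ : f r ⬝ᵥ (W *ᵥ f r) = ∑ p, g p := by
    simp only [g, dotProduct, mulVec, Fintype.sum_prod_type, mul_sum, mul_assoc]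
  have hg : ∀ p ∈ D, g p = W p.1 p.2 * √(W p.1 p.2) * f r p.1 ^ 2 := by
    intro p hp
    simp only [D, outwardDarts, mem_filter, mem_univ, true_and] at hp
    simp only [g, hf.eq_sqrt_mul r p.2 p.1 (by omega) hp.2.2 hp.1 hp.2.1]
    ring
  have hdisj : Disjoint D (D.image Prod.swap) := by
    simp only [D, outwardDarts, Finset.disjoint_left, mem_image, mem_filter, mem_univ, true_and]
    rintro _ ⟨-, h, -⟩ ⟨p, ⟨-, h', -⟩, rfl⟩
    simp only [Prod.fst_swap, Prod.snd_swap] at h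
    omega
  have hswap : ∑ p ∈ D.image Prod.swap, g p = ∑ p ∈ D, g p := by
    rw [sum_image fun _ _ _ _ => Prod.swap_injective.eq_iff.mp]
    refine sum_congr rfl fun p _ => ?_
    simp only [g, Prod.fst_swap, Prod.snd_swap, hW.apply p.1 p.2]
    ring
  calc 2 * ∑ p ∈ D, W p.1 p.2 * √(W p.1 p.2) * f r p.1 ^ 2
      = ∑ p ∈ D ∪ D.image Prod.swap, g p := by
        rw [sum_union hdisj, hswap, ← sum_congr rfl hg, two_mul]
    _ ≤ ∑ p, g p := sum_le_univ_sum_of_nonneg fun p =>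
        mul_nonneg (mul_nonneg (hf.nonneg r p.1) (hW0 p.1 p.2)) (hf.nonneg r p.2)
    _ = f r ⬝ᵥ (W *ᵥ f r) := hQ.symm

theorem sum_outwardDarts_eq_sum_rootMass (g : V × V → ℝ) :
    ∑ r, ∑ p ∈ outwardDarts G k r, g p * f r p.1 ^ 2 =
      ∑ p : V × V with G.Adj p.1 p.2, g p * ∑ ℓ ∈ range k, rootMass G f ℓ p.1 p.2 := by
  simp only [outwardDarts, rootMass, sum_filter, mul_sum]
  rw [sum_comm]
  refine sum_congr rfl fun p _ => ?_
  split_ifs with hadj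
  · rw [sum_comm]
    refine sum_congr rfl fun r _ => ?_
    by_cases h : G.dist r p.1 + 1 = G.dist r p.2 ∧ G.dist r p.2 ≤ k
    · rw [if_pos ⟨hadj, h⟩, sum_eq_single_of_mem (G.dist r p.1) (mem_range.mpr (by omega)),
        if_pos ⟨rfl, by omega⟩]
      intro ℓ _ hne
      rw [if_neg (by omega), mul_zero]
    · rw [if_neg (fun h' => h h'.2)]
      refine (sum_eq_zero fun ℓ hℓ => ?_).symm
      rw [mem_range] at hℓ
      rw [if_neg (by omega), mul_zero]
  · simp [hadj]

theorem IsTruncatedPathWeight.sum_mul_rootMass_le_rootMass_succ [DecidableEq V]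
    (hf : IsTruncatedPathWeight G W k f) (hW : W.IsSymm) (hW0 : ∀ u v, 0 ≤ W u v)
    (hWG : ∀ u v, ¬G.Adj u v → W u v = 0) (hG : ((2 * k + 1 : ℕ) : ℕ∞) < G.egirth)
    {ℓ : ℕ} (hℓ : ℓ + 1 ≤ k) {u v : V} (huv : G.Adj u v) :
    ∑ q ∈ univ.erase v, W u q * rootMass G f ℓ q u ≤ rootMass G f (ℓ + 1) u v := by
  have girth_lt {m : ℕ} (hm : m ≤ 2 * k + 1) : (m : ℕ∞) < G.egirth :=
    lt_of_le_of_lt (by exact_mod_cast hm) hG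
  set N := {q ∈ univ.erase v | G.Adj u q} with hN
  set R : V → Finset V := fun q => {r | G.dist r q = ℓ ∧ G.dist r u = ℓ + 1}
  have hR : ∀ q ∈ N, W u q * rootMass G f ℓ q u = ∑ r ∈ R q, f r u ^ 2 := by
    intro q hq
    rw [hN, mem_filter] at hq
    rw [rootMass, mul_sum]
    refine sum_congr rfl fun r hr => ?_
    simp only [R, mem_filter, mem_univ, true_and] at hr
    rw [hf.eq_sqrt_mul r u q (by omega) (by omega) hq.2.symm (by omega), mul_pow,
      Real.sq_sqrt (hW0 q u), hW.apply u q]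
  have hdisj : (N : Set V).PairwiseDisjoint R := by
    intro q₁ hq₁ q₂ hq₂ hne
    simp only [N, coe_filter, Set.mem_ofPred_eq] at hq₁ hq₂
    refine Finset.disjoint_left.mpr fun r hr₁ hr₂ => hne ?_
    simp only [R, mem_filter, mem_univ, true_and] at hr₁ hr₂
    exact hq₁.2.symm.eq_of_dist_add_one_eq_of_lt_egirth (r := r) hq₂.2.symm (by omega)
      (by omega) (girth_lt (by omega))
  have hsub : N.biUnion R ⊆ ({r | G.dist r u = ℓ + 1 ∧ G.dist r v = ℓ + 1 + 1} : Finset V) := by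
    intro r hr
    simp only [N, R, mem_biUnion, mem_filter, mem_erase, mem_univ, and_true, true_and] at hr ⊢
    obtain ⟨q, ⟨hqv, hq⟩, hrq, hru⟩ := hr
    have := huv.dist_add_one_eq_of_lt_egirth hq.symm hqv (r := r) (by omega)
      (girth_lt (by omega))
    omega
  calc ∑ q ∈ univ.erase v, W u q * rootMass G f ℓ q u
      = ∑ q ∈ N, W u q * rootMass G f ℓ q u := by
        refine (sum_filter_of_ne fun q _ hq => ?_).symm
        by_contra hadj
        rw [hWG u q hadj, zero_mul] at hq
        exact hq rfl
    _ = ∑ r ∈ N.biUnion R, f r u ^ 2 := by rw [sum_biUnion hdisj, sum_congr rfl hR]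
    _ ≤ rootMass G f (ℓ + 1) u v :=
        sum_le_sum_of_subset_of_nonneg hsub fun r _ _ => sq_nonneg _

theorem IsTruncatedPathWeight.pow_le_rootMass [DecidableEq V]
    (hf : IsTruncatedPathWeight G W k f) (hW : W.IsSymm) (hW0 : ∀ u v, 0 ≤ W u v)
    (hWG : ∀ u v, ¬G.Adj u v → W u v = 0) (hG : ((2 * k + 1 : ℕ) : ℕ∞) < G.egirth)
    {β : ℝ} (hβ0 : 0 ≤ β) (hβ : ∀ u v, G.Adj u v → β ≤ ∑ q ∈ univ.erase v, W u q)
    {ℓ : ℕ} (hℓ : ℓ < k) {u v : V} (huv : G.Adj u v) : β ^ ℓ ≤ rootMass G f ℓ u v := by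
  induction ℓ generalizing u v with
  | zero =>
    have hu : u ∈ ({r | G.dist r u = 0 ∧ G.dist r v = 0 + 1} : Finset V) := by
      simpa using huv
    calc β ^ 0 = f u u ^ 2 := by rw [hf.apply_self, pow_zero, one_pow]
      _ ≤ rootMass G f 0 u v := single_le_sum (fun r _ => sq_nonneg (f r u)) hu
  | succ ℓ ih =>
    calc β ^ (ℓ + 1) = β * β ^ ℓ := pow_succ' β ℓ
      _ ≤ (∑ q ∈ univ.erase v, W u q) * β ^ ℓ := by gcongr; exact hβ u v huv
      _ ≤ ∑ q ∈ univ.erase v, W u q * rootMass G f ℓ q u := by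
        rw [sum_mul]
        refine sum_le_sum fun q _ => ?_
        by_cases hq : G.Adj u q
        · exact mul_le_mul_of_nonneg_left (ih (by omega) hq.symm) (hW0 u q)
        · rw [hWG u q hq, zero_mul, zero_mul]
      _ ≤ rootMass G f (ℓ + 1) u v :=
        hf.sum_mul_rootMass_le_rootMass_succ hW hW0 hWG hG (ℓ := ℓ) (by omega) huv

theorem IsTruncatedPathWeight.mul_sum_le_sum_dotProduct_mulVec [DecidableEq V]
    (hf : IsTruncatedPathWeight G W k f) (hW : W.IsSymm) (hW0 : ∀ u v, 0 ≤ W u v)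
    (hWG : ∀ u v, ¬G.Adj u v → W u v = 0) (hG : ((2 * k + 1 : ℕ) : ℕ∞) < G.egirth)
    {β : ℝ} (hβ0 : 0 ≤ β) (hβ1 : β ≤ 1)
    (hβ : ∀ u v, G.Adj u v → β ≤ ∑ q ∈ univ.erase v, W u q) :
    2 * k * β ^ k * ∑ p : V × V with G.Adj p.1 p.2, W p.1 p.2 * √(W p.1 p.2) ≤
      ∑ r, f r ⬝ᵥ (W *ᵥ f r) := by
  have hmass (p : V × V) (hp : G.Adj p.1 p.2) :
      k * β ^ k ≤ ∑ ℓ ∈ range k, rootMass G f ℓ p.1 p.2 := calc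
    k * β ^ k = ∑ ℓ ∈ range k, β ^ k := by rw [sum_const, card_range, nsmul_eq_mul]
    _ ≤ ∑ ℓ ∈ range k, rootMass G f ℓ p.1 p.2 := sum_le_sum fun ℓ hℓ =>
      (pow_le_pow_of_le_one hβ0 hβ1 (mem_range.mp hℓ).le).trans
        (hf.pow_le_rootMass hW hW0 hWG hG hβ0 hβ (mem_range.mp hℓ) hp)
  calc 2 * k * β ^ k * ∑ p : V × V with G.Adj p.1 p.2, W p.1 p.2 * √(W p.1 p.2)
      = 2 * ∑ p : V × V with G.Adj p.1 p.2, W p.1 p.2 * √(W p.1 p.2) * (k * β ^ k) := by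
        rw [← sum_mul]; ring
    _ ≤ 2 * ∑ p : V × V with G.Adj p.1 p.2,
          W p.1 p.2 * √(W p.1 p.2) * ∑ ℓ ∈ range k, rootMass G f ℓ p.1 p.2 := by
        gcongr with p hp
        · exact mul_nonneg (hW0 _ _) (Real.sqrt_nonneg _)
        · exact hmass p (mem_filter.mp hp).2
    _ = ∑ r, 2 * ∑ p ∈ outwardDarts G k r, W p.1 p.2 * √(W p.1 p.2) * f r p.1 ^ 2 := by
        rw [← mul_sum, sum_outwardDarts_eq_sum_rootMass]
    _ ≤ ∑ r, f r ⬝ᵥ (W *ᵥ f r) :=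
        sum_le_sum fun r _ => hf.two_mul_sum_outwardDarts_le_dotProduct_mulVec hW hW0 r

theorem le_sum_adj_mul_sqrt (hW0 : ∀ u v, 0 ≤ W u v) (hWG : ∀ u v, ¬G.Adj u v → W u v = 0)
    {d ε : ℝ} (hd : 0 < d) (hε0 : 0 ≤ ε) (hε : 2 * ε ≤ 1) (hrow : ∀ u, 1 - ε ≤ ∑ v, W u v)
    (hcard : (#{p : V × V | G.Adj p.1 p.2} : ℝ) = d * Fintype.card V) :
    (Fintype.card V : ℝ) * (1 - 2 * ε) / √d ≤
      ∑ p : V × V with G.Adj p.1 p.2, W p.1 p.2 * √(W p.1 p.2) := by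
  set n : ℝ := (Fintype.card V : ℝ)
  set S := ∑ p : V × V with G.Adj p.1 p.2, W p.1 p.2 with hS_def
  set T := ∑ p : V × V with G.Adj p.1 p.2, W p.1 p.2 * √(W p.1 p.2)
  have hS : n * (1 - ε) ≤ S := by
    have hS_eq : S = ∑ u, ∑ v, W u v := by
      rw [hS_def, sum_filter_of_ne fun (p : V × V) _ hp => not_not.mp (mt (hWG p.1 p.2) hp),
        Fintype.sum_prod_type]
    have hrows := sum_le_sum fun u (_ : u ∈ univ) => hrow u
    rwa [sum_const, card_univ, nsmul_eq_mul, ← hS_eq] at hrows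
  have hHolder := sum_pow_three_le_sq_sum_mul_sqrt_mul_card {p : V × V | G.Adj p.1 p.2}
    (fun p => W p.1 p.2) fun p _ => hW0 p.1 p.2
  rw [hcard] at hHolder
  have hn : 0 ≤ n := Nat.cast_nonneg _
  have hT : 0 ≤ T := sum_nonneg fun p _ => mul_nonneg (hW0 _ _) (Real.sqrt_nonneg _)
  rw [div_le_iff₀ (Real.sqrt_pos.mpr hd), ← pow_le_pow_iff_left₀ (by nlinarith) (by positivity)
    two_ne_zero, mul_pow T, Real.sq_sqrt hd.le]
  rcases hn.eq_or_lt with hn0 | hn0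
  · rw [← hn0, zero_mul, zero_pow two_ne_zero]
    positivity
  refine le_of_mul_le_mul_left ?_ hn0
  calc n * (n * (1 - 2 * ε)) ^ 2 = n ^ 3 * (1 - 2 * ε) ^ 2 := by ring
    _ ≤ n ^ 3 * (1 - ε) ^ 3 := by
        gcongr
        nlinarith [mul_nonneg hε0 (show 0 ≤ 1 - ε - ε ^ 2 by nlinarith)]
    _ = (n * (1 - ε)) ^ 3 := by ring
    _ ≤ S ^ 3 := by gcongr; nlinarith
    _ ≤ T ^ 2 * (d * n) := hHolder
    _ = n * (T ^ 2 * d) := by ring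

theorem IsTruncatedPathWeight.exists_le_dotProduct_mulVec [DecidableEq V] [Nonempty V]
    (hf : IsTruncatedPathWeight G W k f) (hW : W.IsSymm) (hW0 : ∀ u v, 0 ≤ W u v)
    (hWG : ∀ u v, ¬G.Adj u v → W u v = 0) (hG : ((2 * k + 1 : ℕ) : ℕ∞) < G.egirth)
    {d ε : ℝ} (hd : 0 < d) (hε0 : 0 ≤ ε) (hwle : ∀ u v, W u v ≤ ε)
    (hrow : ∀ u, 1 - ε ≤ ∑ v, W u v)
    (hcard : (#{p : V × V | G.Adj p.1 p.2} : ℝ) = d * Fintype.card V) :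
    ∃ r, 2 * k * (1 - 2 * (k + 1) * ε) / √d ≤ f r ⬝ᵥ (W *ᵥ f r) := by
  by_cases hε : 2 * ε ≤ 1
  swap
  · obtain ⟨r⟩ := ‹Nonempty V›
    refine ⟨r, le_trans ?_ (dotProduct_nonneg_of_nonneg (hf.nonneg r)
      fun u => dotProduct_nonneg_of_nonneg (hW0 u) (hf.nonneg r))⟩
    refine div_nonpos_of_nonpos_of_nonneg (mul_nonpos_of_nonneg_of_nonpos (by positivity) ?_)
      (Real.sqrt_nonneg d)
    nlinarith
  set β := 1 - 2 * ε
  have hβ (u v : V) (_ : G.Adj u v) : β ≤ ∑ q ∈ univ.erase v, W u q := by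
    rw [sum_erase_eq_sub (mem_univ v)]
    linarith [hrow u, hwle u v]
  have hbernoulli : 1 - 2 * (k + 1) * ε ≤ β ^ (k + 1) := by
    have := one_add_mul_le_pow (a := -(2 * ε)) (by linarith) (k + 1)
    rw [← sub_eq_add_neg] at this
    push_cast at this
    linarith
  obtain ⟨r, -, hr⟩ := exists_le_of_sum_le univ_nonempty <| calc
    ∑ _r : V, 2 * k * (1 - 2 * (k + 1) * ε) / √d
        = Fintype.card V * (2 * k * (1 - 2 * (k + 1) * ε) / √d) := by
          rw [sum_const, card_univ, nsmul_eq_mul]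
    _ ≤ Fintype.card V * (2 * k * β ^ (k + 1) / √d) := by gcongr
    _ = 2 * k * β ^ k * (Fintype.card V * β / √d) := by ring
    _ ≤ 2 * k * β ^ k * ∑ p : V × V with G.Adj p.1 p.2, W p.1 p.2 * √(W p.1 p.2) := by
          gcongr
          exact le_sum_adj_mul_sqrt hW0 hWG hd hε0 hε hrow hcard
    _ ≤ ∑ r, f r ⬝ᵥ (W *ᵥ f r) :=
          hf.mul_sum_le_sum_dotProduct_mulVec hW hW0 hWG hG (by linarith) (by linarith) hβ
  exact ⟨r, hr⟩

end PathWeight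

theorem sub_le_two_mul_one_sub_div_sqrt (k : ℕ) {d : ℝ} (hd : 1 ≤ d) :
    2 * k / √d - 32 * k ^ 2 / d ^ ((3 : ℝ) / 4) ≤
      2 * k * (1 - 2 * (k + 1) * (4 / √d)) / √d := by
  have hd34 : d ^ ((3 : ℝ) / 4) ≤ d := by
    simpa using Real.rpow_le_rpow_of_exponent_le hd (show (3 : ℝ) / 4 ≤ 1 by norm_num)
  have hk : (k : ℝ) * (k + 1) ≤ 2 * k ^ 2 := by
    have : (k : ℝ) ≤ k * k := by exact_mod_cast Nat.le_mul_self k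
    nlinarith
  have hrhs : 2 * k * (1 - 2 * (k + 1) * (4 / √d)) / √d =
      2 * k / √d - 16 * (k * (k + 1)) / (√d * √d) := by
    field_simp
    ring
  rw [hrhs, Real.mul_self_sqrt (by linarith)]
  refine sub_le_sub_left ?_ _
  calc 16 * (k * (k + 1)) / d ≤ 32 * k ^ 2 / d :=
        div_le_div_of_nonneg_right (by linarith) (by linarith)
    _ ≤ 32 * k ^ 2 / d ^ ((3 : ℝ) / 4) :=
        div_le_div_of_nonneg_left (by positivity) (by positivity) hd34

open Matrix in
/-- In a weighted graph with n vertices, dn/2 edges, max weighted degree 1,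
min weighted degree ≥ 1 - 4/√d, edge weights ≤ 4/√d, min combinatorial degree ≥ d/4 and
girth > 2k+1 (d ≥ 25, k ≤ d^{1/8}), there is a vertex r with
f_rᵀ W f_r ≥ 2k/√d - C·k²/d^{3/4}, where f_r(v) is the square root of the product of the
edge weights on the unique shortest path from r to v when dist(r,v) ≤ k, and 0 otherwise. -/
theorem exists_good_root :
    ∃ C : ℝ, 0 < C ∧
      ∀ (n : ℕ) (d : ℝ) (k : ℕ) (_hd : 25 ≤ d) (_hk1 : 1 ≤ k)
        (_hk : (k : ℝ) ≤ d ^ ((1 : ℝ) / 8))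
        (W : Matrix (Fin n) (Fin n) ℝ)
        (_hsymm : W.IsSymm)
        (_hnonneg : ∀ u v, 0 ≤ W u v)
        (_hdiag : ∀ u, W u u = 0)
        (G : SimpleGraph (Fin n))
        (_hadj : ∀ u v, G.Adj u v ↔ u ≠ v ∧ W u v ≠ 0)
        (_hedges : (G.edgeSet.ncard : ℝ) = d * n / 2)
        (_hgirth : (2 * k + 1 : ℕ∞) < G.girth)
        (_hmindeg : ∀ v, (({u | G.Adj v u}.ncard : ℝ)) ≥ d / 4)
        (_hwle : ∀ u v, W u v ≤ 4 / Real.sqrt d)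
        (_hmaxdeg : ∀ u, ∑ v, W u v ≤ 1)
        (_hmindegw : ∀ u, 1 - 4 / Real.sqrt d ≤ ∑ v, W u v)
        (f : Fin n → Fin n → ℝ)
        (_hfr : ∀ r, f r r = 1)
        (_hfar : ∀ r v, k < G.dist r v → f r v = 0)
        (_hfunreach : ∀ r v, ¬ G.Reachable r v → f r v = 0)
        (_hfrec : ∀ r v u, 1 ≤ G.dist r v → G.dist r v ≤ k → G.Adj u v →
          G.dist r u + 1 = G.dist r v → f r v = Real.sqrt (W u v) * f r u),
        ∃ r, f r ⬝ᵥ (W *ᵥ f r) ≥ 2 * k / Real.sqrt d - C * k ^ 2 / d ^ ((3 : ℝ) / 4) := by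
  refine ⟨32, by norm_num, fun n d k hd _ _ W hsymm hnonneg hdiag G hadj hedges hgirth _ hwle _
    hmindegw f hfr hfar hfunreach hfrec => ?_⟩
  let _ : DecidableRel G.Adj := Classical.decRel _
  have hG : ((2 * k + 1 : ℕ) : ℕ∞) < G.egirth := by
    push_cast
    exact hgirth.trans_le (ENat.natCast_toNat_le_self _)
  have : Nonempty (Fin n) := by
    by_contra h
    have := not_nonempty_iff.mp h
    simp [girth_eq_zero.mpr IsAcyclic.of_subsingleton] at hgirth
  have hWG : ∀ u v, ¬G.Adj u v → W u v = 0 := fun u v h => by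
    by_contra hW
    exact h ((hadj u v).mpr ⟨fun huv => hW (huv ▸ hdiag u), hW⟩)
  have hcard : (#{p : Fin n × Fin n | G.Adj p.1 p.2} : ℝ) = d * Fintype.card (Fin n) := by
    rw [card_filter_adj_eq_two_mul_card_edgeFinset, Fintype.card_fin, ← Set.ncard_coe_finset,
      coe_edgeFinset]
    push_cast
    linarith
  obtain ⟨r, hr⟩ := IsTruncatedPathWeight.exists_le_dotProduct_mulVec
    ⟨hfr, hfar, hfunreach, hfrec⟩ hsymm hnonneg hWG hG (by positivity) (by positivity) hwle
    hmindegw hcard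
  exact ⟨r, ((sub_le_two_mul_one_sub_div_sqrt k (by linarith)).trans hr).ge⟩
end
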